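/- Let R be a maximal rook placement in a region P. Then the set of strips of P containing an element of R is a strip cover of P of size at most 2·|R|; moreover, since every strip of P contains at most one element of R, one has |R| ≤ s ≤ 2·|R|, where s is the minimum size of a strip cover of P. -/

import Mathlib

/-- A pixel is a point of `ℤ × ℤ`. -/
abbrev Pixel : Type := ℤ × ℤ

/-- Two pixels are adjacent if their ℓ¹-distance is 1. -/
def Adjacent (p q : Pixel) : Prop := |p.1 - q.1| + |p.2 - q.2| = 1

/-- A cycle: a cyclic sequence of `k ≥ 2` pixels (encoded as a `k`-periodic
function on `ℤ`) in which consecutive pixels are adjacent. -/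
structure GridCycle where
  k : ℕ
  two_le : 2 ≤ k
  pts : ℤ → Pixel
  periodic : ∀ i : ℤ, pts (i + k) = pts i
  adj : ∀ i : ℤ, Adjacent (pts i) (pts (i + 1))

/-- The set of pixels covered by a cycle. -/
def GridCycle.covers (C : GridCycle) : Set Pixel := Set.range C.pts

/-- Turn cost at position `i`: 0 if the walk goes straight, 2 for a U-turn,
1 for a 90° turn. -/
def GridCycle.turnCost (C : GridCycle) (i : ℤ) : ℕ :=
  if C.pts (i + 1) - C.pts i = C.pts i - C.pts (i - 1) then 0
  else if C.pts (i + 1) - C.pts i = -(C.pts i - C.pts (i - 1)) then 2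
  else 1

/-- The number of turns of a cycle: total turn cost over all positions. -/
def GridCycle.turns (C : GridCycle) : ℕ :=
  ∑ i ∈ Finset.range C.k, C.turnCost (i : ℤ)

/-- A set of pixels is connected under adjacency. -/
def ConnectedIn (P : Set Pixel) : Prop :=
  ∀ p ∈ P, ∀ q ∈ P, Relation.ReflTransGen (fun a b => b ∈ P ∧ Adjacent a b) p q

/-- A region is a finite nonempty set of pixels connected under adjacency. -/
def IsRegion (P : Set Pixel) : Prop := P.Finite ∧ P.Nonempty ∧ ConnectedIn P

/-- A tour of `P`: a cycle whose pixels lie in `P` covering every pixel of `P`. -/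
def IsTour (P : Set Pixel) (C : GridCycle) : Prop := C.covers = P

/-- A cycle cover of `P`: a finite collection of cycles with pixels in `P`
covering every pixel of `P`. -/
def IsCycleCover (P : Set Pixel) (CC : List GridCycle) : Prop :=
  (∀ C ∈ CC, C.covers ⊆ P) ∧ ∀ p ∈ P, ∃ C ∈ CC, p ∈ C.covers

/-- The number of turns of a cycle cover. -/
def coverTurns (CC : List GridCycle) : ℕ := (CC.map GridCycle.turns).sum

/-- A horizontal strip of `P`: a maximal horizontal run of pixels of `P`. -/
def IsHStrip (P S : Set Pixel) : Prop :=
  ∃ x y : ℤ, ∃ ℓ : ℕ, S = {p : Pixel | p.2 = y ∧ x ≤ p.1 ∧ p.1 ≤ x + (ℓ : ℤ)} ∧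
    S ⊆ P ∧ (x - 1, y) ∉ P ∧ (x + (ℓ : ℤ) + 1, y) ∉ P

/-- A vertical strip of `P`: a maximal vertical run of pixels of `P`. -/
def IsVStrip (P S : Set Pixel) : Prop :=
  ∃ x y : ℤ, ∃ ℓ : ℕ, S = {p : Pixel | p.1 = x ∧ y ≤ p.2 ∧ p.2 ≤ y + (ℓ : ℤ)} ∧
    S ⊆ P ∧ (x, y - 1) ∉ P ∧ (x, y + (ℓ : ℤ) + 1) ∉ P

/-- A strip of `P` is a horizontal or vertical strip. -/
def IsStrip (P S : Set Pixel) : Prop := IsHStrip P S ∨ IsVStrip P S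

/-- A strip cover of `P`: a set of strips of `P` whose union is `P`. -/
def IsStripCover (P : Set Pixel) (F : Set (Set Pixel)) : Prop :=
  (∀ S ∈ F, IsStrip P S) ∧ ⋃₀ F = P

/-- The minimum size of a strip cover of `P`. -/
noncomputable def minStripCover (P : Set Pixel) : ℕ :=
  sInf {m | ∃ F, IsStripCover P F ∧ F.ncard = m}

/-- A rook placement in `P`: a subset of `P` no two distinct elements of which
lie in a common strip of `P`. -/
def IsRookPlacement (P R : Set Pixel) : Prop :=
  R ⊆ P ∧ ∀ p ∈ R, ∀ q ∈ R, p ≠ q → ¬∃ S, IsStrip P S ∧ p ∈ S ∧ q ∈ S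

/-- A maximal rook placement: every pixel of `P` lies in a common strip with
some element of `R`. -/
def IsMaximalRookPlacement (P R : Set Pixel) : Prop :=
  IsRookPlacement P R ∧ ∀ p ∈ P, ∃ r ∈ R, ∃ S, IsStrip P S ∧ p ∈ S ∧ r ∈ S

/-!
Horizontal strips of `P` are pairwise disjoint, and so are vertical ones, since two maximal runs
in the same row (column) that share a pixel coincide. Hence the strips through the rooks number
at most `2 |R|`, and by maximality of `R` they cover `P`. Conversely no strip holds two rooks, so
choosing for each rook a strip of a cover through it is injective, and every strip cover has at
least `|R|` strips.
-/

theorem ncard_le_ncard_of_subset_sUnion {α : Type*} {R : Set α} {G : Set (Set α)}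
    (hG : G.Finite) (hcover : R ⊆ ⋃₀ G) (hsub : ∀ S ∈ G, (R ∩ S).Subsingleton) :
    R.ncard ≤ G.ncard := by
  have hmem : ∀ r ∈ R, ∃ S ∈ G, r ∈ S := fun r hr => hcover hr
  choose! f hfG hf using hmem
  refine Set.ncard_le_ncard_of_injOn f hfG (fun r hr r' hr' hrr' => ?_) hG
  exact hsub _ (hfG r hr) ⟨hr, hf r hr⟩ ⟨hr', hrr' ▸ hf r' hr'⟩

theorem ncard_le_ncard_of_pairwiseDisjoint {α : Type*} {R : Set α} {G : Set (Set α)}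
    (hR : R.Finite) (hG : G.PairwiseDisjoint id) (hmeet : ∀ S ∈ G, (R ∩ S).Nonempty) :
    G.ncard ≤ R.ncard := by
  obtain rfl | ⟨S₀, hS₀⟩ := G.eq_empty_or_nonempty
  · simp
  have : Nonempty α := ⟨(hmeet S₀ hS₀).some⟩
  choose! f hf using hmeet
  refine Set.ncard_le_ncard_of_injOn f (fun S hS => (hf S hS).1) (fun S hS S' hS' hSS' => ?_) hR
  exact hG.elim hS hS' (Set.not_disjoint_iff.2 ⟨f S, (hf S hS).2, hSS' ▸ (hf S' hS').2⟩)

theorem Int.eq_of_maximal_Icc {A : Set ℤ} {a b a' b' t : ℤ}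
    (h : Set.Icc a b ⊆ A) (ha : a - 1 ∉ A) (hb : b + 1 ∉ A)
    (h' : Set.Icc a' b' ⊆ A) (ha' : a' - 1 ∉ A) (hb' : b' + 1 ∉ A)
    (ht : t ∈ Set.Icc a b) (ht' : t ∈ Set.Icc a' b') : a = a' ∧ b = b' := by
  obtain ⟨hat, htb⟩ := ht
  obtain ⟨hat', htb'⟩ := ht'
  constructor
  · rcases lt_trichotomy a a' with hlt | heq | hlt
    · exact absurd (h ⟨by omega, by omega⟩) ha'
    · exact heq
    · exact absurd (h' ⟨by omega, by omega⟩) ha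
  · rcases lt_trichotomy b b' with hlt | heq | hlt
    · exact absurd (h' ⟨by omega, by omega⟩) hb
    · exact heq
    · exact absurd (h ⟨by omega, by omega⟩) hb'

theorem IsHStrip.eq_of_mem {P S S' : Set Pixel} (h : IsHStrip P S) (h' : IsHStrip P S')
    {p : Pixel} (hp : p ∈ S) (hp' : p ∈ S') : S = S' := by
  obtain ⟨x, y, l, rfl, hsub, hl, hr⟩ := h
  obtain ⟨x', y', l', rfl, hsub', hl', hr'⟩ := h'
  obtain ⟨rfl, hpx⟩ := hp
  obtain ⟨rfl, hpx'⟩ := hp'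
  obtain ⟨rfl, hend⟩ := Int.eq_of_maximal_Icc (A := {t | (t, p.2) ∈ P})
    (fun t ht => hsub ⟨rfl, ht⟩) hl hr (fun t ht => hsub' ⟨rfl, ht⟩) hl' hr' hpx hpx'
  obtain rfl : l = l' := by omega
  rfl

theorem IsVStrip.eq_of_mem {P S S' : Set Pixel} (h : IsVStrip P S) (h' : IsVStrip P S')
    {p : Pixel} (hp : p ∈ S) (hp' : p ∈ S') : S = S' := by
  obtain ⟨x, y, l, rfl, hsub, hl, hr⟩ := h
  obtain ⟨x', y', l', rfl, hsub', hl', hr'⟩ := h'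
  obtain ⟨rfl, hpy⟩ := hp
  obtain ⟨rfl, hpy'⟩ := hp'
  obtain ⟨rfl, hend⟩ := Int.eq_of_maximal_Icc (A := {t | (p.1, t) ∈ P})
    (fun t ht => hsub ⟨rfl, ht⟩) hl hr (fun t ht => hsub' ⟨rfl, ht⟩) hl' hr' hpy hpy'
  obtain rfl : l = l' := by omega
  rfl

theorem pairwiseDisjoint_hStrips (P : Set Pixel) : {S | IsHStrip P S}.PairwiseDisjoint id :=
  fun _ hS _ hS' hne => Set.disjoint_left.2 fun _ hp hp' => hne (hS.eq_of_mem hS' hp hp')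

theorem pairwiseDisjoint_vStrips (P : Set Pixel) : {S | IsVStrip P S}.PairwiseDisjoint id :=
  fun _ hS _ hS' hne => Set.disjoint_left.2 fun _ hp hp' => hne (hS.eq_of_mem hS' hp hp')

theorem IsStrip.subset {P S : Set Pixel} (h : IsStrip P S) : S ⊆ P := by
  rcases h with ⟨_, _, _, _, hsub, _⟩ | ⟨_, _, _, _, hsub, _⟩ <;> exact hsub

theorem IsStripCover.finite {P : Set Pixel} {G : Set (Set Pixel)} (hG : IsStripCover P G)
    (hP : P.Finite) : G.Finite :=
  hP.finite_subsets.subset fun S hS => (hG.1 S hS).subset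

def starCover (P R : Set Pixel) : Set (Set Pixel) := {S | IsStrip P S ∧ ∃ r ∈ R, r ∈ S}

theorem ncard_starCover_le {P R : Set Pixel} (hR : R.Finite) :
    (starCover P R).ncard ≤ 2 * R.ncard := by
  have hsplit : starCover P R =
      {S | IsHStrip P S ∧ ∃ r ∈ R, r ∈ S} ∪ {S | IsVStrip P S ∧ ∃ r ∈ R, r ∈ S} :=
    Set.ext fun _ => or_and_right
  have hcard {Q : Set Pixel → Prop} (hQ : {S | Q S}.PairwiseDisjoint id) :
      {S | Q S ∧ ∃ r ∈ R, r ∈ S}.ncard ≤ R.ncard :=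
    ncard_le_ncard_of_pairwiseDisjoint hR (hQ.subset fun _ hS => hS.1)
      fun _ ⟨_, r, hr, hrS⟩ => ⟨r, hr, hrS⟩
  calc (starCover P R).ncard
      ≤ {S | IsHStrip P S ∧ ∃ r ∈ R, r ∈ S}.ncard + {S | IsVStrip P S ∧ ∃ r ∈ R, r ∈ S}.ncard :=
        hsplit ▸ Set.ncard_union_le _ _
    _ ≤ 2 * R.ncard := by
        have := hcard (pairwiseDisjoint_hStrips P)
        have := hcard (pairwiseDisjoint_vStrips P)
        omega

theorem IsMaximalRookPlacement.isStripCover_starCover {P R : Set Pixel}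
    (hR : IsMaximalRookPlacement P R) : IsStripCover P (starCover P R) := by
  refine ⟨fun S hS => hS.1, Set.Subset.antisymm ?_ fun p hp => ?_⟩
  · exact Set.sUnion_subset fun S hS => hS.1.subset
  · obtain ⟨r, hr, S, hS, hpS, hrS⟩ := hR.2 p hp
    exact ⟨S, ⟨hS, r, hr, hrS⟩, hpS⟩

theorem IsRookPlacement.subsingleton_inter {P R S : Set Pixel} (hR : IsRookPlacement P R)
    (hS : IsStrip P S) : (R ∩ S).Subsingleton := fun r hr r' hr' =>
  by_contra fun hne => hR.2 r hr.1 r' hr'.1 hne ⟨S, hS, hr.2, hr'.2⟩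

theorem IsRookPlacement.ncard_le_ncard_of_isStripCover {P R : Set Pixel} {G : Set (Set Pixel)}
    (hR : IsRookPlacement P R) (hG : IsStripCover P G) (hGfin : G.Finite) :
    R.ncard ≤ G.ncard :=
  ncard_le_ncard_of_subset_sUnion hGfin (hG.2 ▸ hR.1) fun _ hS => hR.subsingleton_inter (hG.1 _ hS)

/-- Star cover from a maximal rook placement: for a maximal rook placement `R`
in a region `P`, the set of strips of `P` containing an element of `R` is a
strip cover of `P` of size at most `2·|R|`; moreover every strip of `P`
contains at most one element of `R`, and `|R| ≤ s ≤ 2·|R|` where `s` is the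
minimum size of a strip cover of `P`. -/
theorem maximalRook_star_cover (P : Set Pixel) (hP : IsRegion P)
    (R : Set Pixel) (hR : IsMaximalRookPlacement P R) :
    IsStripCover P {S | IsStrip P S ∧ ∃ r ∈ R, r ∈ S} ∧
    {S | IsStrip P S ∧ ∃ r ∈ R, r ∈ S}.ncard ≤ 2 * R.ncard ∧
    (∀ S : Set Pixel, IsStrip P S → (R ∩ S).ncard ≤ 1) ∧
    R.ncard ≤ minStripCover P ∧ minStripCover P ≤ 2 * R.ncard := by
  have hcover : IsStripCover P (starCover P R) := hR.isStripCover_starCover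
  have hcard : (starCover P R).ncard ≤ 2 * R.ncard := ncard_starCover_le (hP.1.subset hR.1.1)
  have hmin : minStripCover P ≤ (starCover P R).ncard := Nat.sInf_le ⟨_, hcover, rfl⟩
  refine ⟨hcover, hcard, fun S hS => ?_, ?_, hmin.trans hcard⟩
  · have hRS := hR.1.subsingleton_inter hS
    have := hRS.finite.to_subtype
    exact Set.ncard_le_one_iff_subsingleton.2 hRS
  · refine le_csInf ⟨_, _, hcover, rfl⟩ ?_
    rintro _ ⟨G, hG, rfl⟩
    exact hR.1.ncard_le_ncard_of_isStripCover hG (hG.finite hP.1)
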